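/- arXiv:2505.16907 — 3 statements merged into one kernel-verified Lean document; each statement's English description precedes it below -/
import Mathlib

section
/- Let β₁, β₂ : [0,1] → ℝ be continuous functions with β₁(0) = β₂(0) = 0 and β₁(1) = β₂(1) = 1. Then there exists t ∈ [0,1] such that |β₁(t)(1 - β₂(t))| + |β₂(t)(1 - β₁(t))| ≥ 1/6. -/
/-- If `β₁, β₂ : [0,1] → ℝ` are continuous with `β₁ 0 = β₂ 0 = 0` and
`β₁ 1 = β₂ 1 = 1`, then there is `t ∈ [0,1]` with
`|β₁ t * (1 - β₂ t)| + |β₂ t * (1 - β₁ t)| ≥ 1/6`. -/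
theorem stmt_1 (β₁ β₂ : ℝ → ℝ)
    (h₁ : ContinuousOn β₁ (Set.Icc (0 : ℝ) 1))
    (h₂ : ContinuousOn β₂ (Set.Icc (0 : ℝ) 1))
    (h₁0 : β₁ 0 = 0) (h₂0 : β₂ 0 = 0) (h₁1 : β₁ 1 = 1) (h₂1 : β₂ 1 = 1) :
    ∃ t ∈ Set.Icc (0 : ℝ) 1,
      (1 : ℝ) / 6 ≤ |β₁ t * (1 - β₂ t)| + |β₂ t * (1 - β₁ t)| := by
  obtain ⟨t, ht, hval⟩ := intermediate_value_Icc (by norm_num : (0:ℝ) ≤ 1) h₁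
    (by rw [h₁0, h₁1]; exact ⟨by norm_num, by norm_num⟩ : (1:ℝ)/2 ∈ Set.Icc (β₁ 0) (β₁ 1))
  refine ⟨t, ht, ?_⟩
  rw [hval]
  have key : (1:ℝ) ≤ |1 - β₂ t| + |β₂ t| := by
    simpa using abs_add_le (1 - β₂ t) (β₂ t)
  rw [abs_mul, abs_mul]
  rw [show |(1:ℝ)/2| = 1/2 by norm_num, show |1 - (1:ℝ)/2| = 1/2 by norm_num]
  nlinarith [abs_nonneg (1 - β₂ t), abs_nonneg (β₂ t)]
end

section
/- Let X' be Lipschitz homotopy equivalent to X via maps f : X → X' and g : X' → X with Lipschitz homotopies H : g ∘ f ≃ id_X and H' : f ∘ g ≃ id_{X'}. Let L_{H'} be the maximum over t of the Lipschitz constant of the slice H'_t : X' → X'. Then for any metric space Y and any L > 0, the map Lip_{≤L}(X', Y) → Lip_{≤ Lip(g)·Lip(f)·L}(X', Y) given by u ↦ u ∘ f ∘ g is homotopic, within Lip_{≤ L_{H'}·L}(X', Y), to the inclusion. -/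
open Set

/-- Evaluation is jointly continuous on an equi-Lipschitz family with the
compact-open topology. -/
lemma eval_cont {X' Y : Type*} [MetricSpace X'] [MetricSpace Y] (L : NNReal) :
    Continuous fun p : {u : C(X', Y) // LipschitzWith L u} × X' => p.1.1 p.2 := by
  rw [continuous_iff_continuousAt]
  rintro ⟨u₀, x₀⟩
  rw [ContinuousAt, Metric.tendsto_nhds]
  intro ε hε
  have h1 : ∀ᶠ p : {u : C(X', Y) // LipschitzWith L u} × X' in nhds (u₀, x₀),
      dist (p.1.1 x₀) (u₀.1 x₀) < ε / 2 := by
    have : Continuous fun p : {u : C(X', Y) // LipschitzWith L u} × X' =>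
        dist (p.1.1 x₀) (u₀.1 x₀) := by
      exact (Continuous.comp (continuous_eval_const x₀)
        (continuous_subtype_val.comp continuous_fst)).dist continuous_const
    have := this.continuousAt (x := (u₀, x₀))
    exact this.eventually_lt continuousAt_const (by simpa using half_pos hε)
  have h2 : ∀ᶠ p : {u : C(X', Y) // LipschitzWith L u} × X' in nhds (u₀, x₀),
      dist p.2 x₀ < ε / (2 * (L + 1)) := by
    have hd : (0:ℝ) < ε / (2 * (L + 1)) := by positivity
    have : Continuous fun p : {u : C(X', Y) // LipschitzWith L u} × X' =>
        dist p.2 x₀ := continuous_snd.dist continuous_const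
    exact (this.continuousAt (x := (u₀, x₀))).eventually_lt continuousAt_const (by simpa using hd)
  filter_upwards [h1, h2] with p hp1 hp2
  calc dist (p.1.1 p.2) (u₀.1 x₀) ≤ dist (p.1.1 p.2) (p.1.1 x₀) + dist (p.1.1 x₀) (u₀.1 x₀) :=
        dist_triangle _ _ _
    _ ≤ L * dist p.2 x₀ + dist (p.1.1 x₀) (u₀.1 x₀) := by
        gcongr; exact p.1.2.dist_le_mul _ _
    _ < L * (ε / (2 * (L + 1))) + ε / 2 := by
        refine add_lt_add_of_le_of_lt ?_ hp1
        exact mul_le_mul_of_nonneg_left hp2.le (NNReal.coe_nonneg L)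
    _ ≤ ε / 2 + ε / 2 := by
        have key : (L:ℝ) * (ε / (2 * (L + 1))) ≤ ε / 2 := by
          calc (L:ℝ) * (ε / (2 * (L + 1))) ≤ (L + 1) * (ε / (2 * (L + 1))) := by
                refine mul_le_mul_of_nonneg_right ?_ (by positivity)
                linarith [NNReal.coe_nonneg L]
            _ = ε / 2 := by
                have h1 : (L:ℝ) + 1 ≠ 0 := by positivity
                field_simp
        linarith
    _ = ε := add_halves ε


/-- Let `f : X → X'`, `g : X' → X` be a Lipschitz homotopy equivalence,
with a Lipschitz homotopy `H' : f ∘ g ≃ id_{X'}` all of whose time slices `H'_t` are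
`K`-Lipschitz (so `K` bounds `L_{H'}`), and a Lipschitz homotopy `H : g ∘ f ≃ id_X`.
Then for any metric space `Y` and `L > 0`, the map `u ↦ u ∘ f ∘ g` from
`Lip_{≤L}(X',Y)` (which lands in `Lip_{≤ Lip(g)·Lip(f)·L}(X',Y)`) is homotopic, within
`Lip_{≤ K·L}(X',Y)`, to the inclusion.  Function spaces carry the compact-open
topology. -/
theorem stmt_11 {X X' Y : Type*} [MetricSpace X] [MetricSpace X'] [MetricSpace Y]
    (Kf Kg K : NNReal) (f : X → X') (g : X' → X)
    (hf : LipschitzWith Kf f) (hg : LipschitzWith Kg g)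
    (KH : NNReal) (H : ℝ → X → X)
    (Hcont : Continuous fun p : ℝ × X => H p.1 p.2)
    (H0 : H 0 = g ∘ f) (H1 : H 1 = id)
    (Hlip : ∀ t ∈ Icc (0 : ℝ) 1, LipschitzWith KH (H t))
    (H' : ℝ → X' → X')
    (H'cont : Continuous fun p : ℝ × X' => H' p.1 p.2)
    (H'0 : H' 0 = f ∘ g) (H'1 : H' 1 = id)
    (H'lip : ∀ t ∈ Icc (0 : ℝ) 1, LipschitzWith K (H' t))
    (L : NNReal) (hL : 0 < L) :
    -- `u ∘ f ∘ g` is `Lip(g)·Lip(f)·L`-Lipschitz for every `u ∈ Lip_{≤L}(X',Y)` …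
    (∀ u : {u : C(X', Y) // LipschitzWith L u},
      LipschitzWith (Kg * Kf * L) fun x => u.1 (f (g x))) ∧
    -- … and `u ↦ u ∘ f ∘ g` is homotopic to the inclusion within `Lip_{≤ K·L}(X',Y)`:
    ∃ F : C({u : C(X', Y) // LipschitzWith L u} × unitInterval,
            {u : C(X', Y) // LipschitzWith (K * L) u}),
      (∀ u, ((F (u, 0)).1 : X' → Y) = fun x => u.1 (f (g x))) ∧
      (∀ u, ((F (u, 1)).1 : X' → Y) = (u.1 : X' → Y)) := by
  constructor
  · intro u
    have : (Kg * Kf * L) = L * (Kf * Kg) := by ring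
    rw [this]
    exact u.2.comp (hf.comp hg)
  · -- the underlying jointly continuous map
    set S := {u : C(X', Y) // LipschitzWith L u}
    have hG : Continuous fun q : (S × unitInterval) × X' =>
        (q.1.1.1 : C(X', Y)) (H' (q.1.2 : ℝ) q.2) := by
      have h1 : Continuous fun q : (S × unitInterval) × X' => (H' (q.1.2 : ℝ) q.2 : X') :=
        H'cont.comp (((continuous_subtype_val.comp continuous_snd).comp continuous_fst).prodMk
          continuous_snd)
      exact (eval_cont L).comp ((continuous_fst.comp continuous_fst).prodMk h1)
    let G : C((S × unitInterval) × X', Y) := ⟨_, hG⟩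
    let F₀ : C(S × unitInterval, C(X', Y)) := G.curry
    have hlip : ∀ p : S × unitInterval, LipschitzWith (K * L) (F₀ p) := by
      rintro ⟨u, t⟩
      have h1 : LipschitzWith (L * K) (fun x => u.1 (H' (t : ℝ) x)) :=
        u.2.comp (H'lip t t.2)
      have : (K * L) = L * K := mul_comm _ _
      rw [this]
      exact h1
    refine ⟨⟨fun p => ⟨F₀ p, hlip p⟩, F₀.continuous.subtype_mk _⟩, ?_, ?_⟩
    · intro u
      funext x
      simp only [ContinuousMap.coe_mk, F₀, G, ContinuousMap.curry_apply]
      rw [show ((0 : unitInterval) : ℝ) = 0 from rfl, H'0]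
      rfl
    · intro u
      funext x
      simp only [ContinuousMap.coe_mk, F₀, G, ContinuousMap.curry_apply]
      rw [show ((1 : unitInterval) : ℝ) = 1 from rfl, H'1]
      rfl
end

section
/- Let A be the free graded-commutative ℝ-DGA on generators a₁, a₂ of degree 3, b of degree 5, and c₂ of degree 7, with da₁ = da₂ = 0, db = a₁a₂, dc₂ = b·a₂. Let H = Λ(x,y)/(x³) with deg x = 2, deg y = 3, d = 0, and let Ω*[0,1] act as forms on the interval. Then the map η_L : A → H ⊗ Ω*[0,1] given by η_L(a₁) = y, η_L(a₂) = -2L⁶ x dt, η_L(b) = L⁶ y x (2t - 1), η_L(c₂) = 2L¹² y x² t(1-t) is a DGA homomorphism, and restricts at t = 0 to φ_L and at t = 1 to ψ_L (where φ_L(b) = -L⁶yx, ψ_L(b) = L⁶yx, both vanishing on a₂, c₂ and sending a₁ to y). -/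
open Set

/-- A DGA homomorphism `η : A → H ⊗ Ω*[0,1]`, where
`A = Λ(a₁,a₂,b,c₂)` with `deg a₁ = deg a₂ = 3`, `deg b = 5`, `deg c₂ = 7`,
`d a₁ = d a₂ = 0`, `d b = a₁a₂`, `d c₂ = b a₂`, and
`H = Λ(x,y)/(x³)` (`deg x = 2`, `deg y = 3`, zero differential),
written out in coordinates.  Degree bookkeeping in `H ⊗ Ω*[0,1]`
(`H` has basis `1, x, x², y, yx, yx²` in degrees `0,2,4,3,5,7`, and a form is
`f(t) + g(t) dt`) forces
  `η(a₁) = A₁(t)·y + F₁(t)·x dt`,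
  `η(a₂) = A₂(t)·y + F₂(t)·x dt`,
  `η(b)  = B(t)·yx + G(t)·x² dt`,
  `η(c₂) = C(t)·yx²` (the degree-6 part of `H` is zero),
and the compatibility `d ∘ η = η ∘ d` with the differentials is exactly the system of
ODEs recorded in the fields `d_a₁, d_a₂, d_b, d_c₂` below (Koszul signs as in the
paper's conventions). -/
structure CoeffDGAHom where
  A₁ : ℝ → ℝ
  A₂ : ℝ → ℝ
  B : ℝ → ℝ
  C : ℝ → ℝ
  F₁ : ℝ → ℝ
  F₂ : ℝ → ℝ
  G : ℝ → ℝ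
  hA₁ : Differentiable ℝ A₁
  hA₂ : Differentiable ℝ A₂
  hB : Differentiable ℝ B
  hC : Differentiable ℝ C
  hF₁ : Continuous F₁
  hF₂ : Continuous F₂
  hG : Continuous G
  /-- `η(d a₁) = 0 = d(η a₁)` -/
  d_a₁ : ∀ t ∈ Icc (0 : ℝ) 1, deriv A₁ t = 0
  /-- `η(d a₂) = 0 = d(η a₂)` -/
  d_a₂ : ∀ t ∈ Icc (0 : ℝ) 1, deriv A₂ t = 0
  /-- `d(η b) = η(a₁) · η(a₂)` -/
  d_b : ∀ t ∈ Icc (0 : ℝ) 1, deriv B t = -(A₁ t * F₂ t - A₂ t * F₁ t)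
  /-- `d(η c₂) = η(b) · η(a₂)` -/
  d_c₂ : ∀ t ∈ Icc (0 : ℝ) 1, deriv C t = B t * F₂ t - G t * A₂ t

theorem hasDerivAt_mul_two_mul_sub_one (a t : ℝ) :
    HasDerivAt (fun t => a * (2 * t - 1)) (2 * a) t :=
  ((((hasDerivAt_id' t).const_mul 2).sub_const 1).const_mul a).congr_deriv (by ring)

theorem hasDerivAt_mul_mul_one_sub (a t : ℝ) :
    HasDerivAt (fun t => a * t * (1 - t)) (a * (1 - 2 * t)) t :=
  (((hasDerivAt_id' t).const_mul a).fun_mul ((hasDerivAt_id' t).const_sub 1)).congr_deriv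
    (by ring)

noncomputable def etaL (L : ℝ) : CoeffDGAHom where
  A₁ _ := 1
  A₂ _ := 0
  B t := L ^ 6 * (2 * t - 1)
  C t := 2 * L ^ 12 * t * (1 - t)
  F₁ _ := 0
  F₂ _ := -2 * L ^ 6
  G _ := 0
  hA₁ := differentiable_const _
  hA₂ := differentiable_const _
  hB t := (hasDerivAt_mul_two_mul_sub_one _ t).differentiableAt
  hC t := (hasDerivAt_mul_mul_one_sub _ t).differentiableAt
  hF₁ := continuous_const
  hF₂ := continuous_const
  hG := continuous_const
  d_a₁ _ _ := deriv_const _ _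
  d_a₂ _ _ := deriv_const _ _
  d_b t _ := (hasDerivAt_mul_two_mul_sub_one _ t).deriv.trans (by ring)
  d_c₂ t _ := (hasDerivAt_mul_mul_one_sub _ t).deriv.trans (by ring)

/-- the explicit map `η_L` with
`η_L(a₁) = y`, `η_L(a₂) = -2L⁶ x dt`, `η_L(b) = L⁶ yx (2t-1)`,
`η_L(c₂) = 2L¹² yx² t(1-t)` is a DGA homomorphism `A → H ⊗ Ω*[0,1]`, and it restricts
at `t = 0` to `φ_L` and at `t = 1` to `ψ_L` (where `φ_L(b) = -L⁶ yx`,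
`ψ_L(b) = L⁶ yx`, both send `a₁ ↦ y` and vanish on `a₂` and `c₂`). -/
theorem stmt_14 (L : ℝ) :
    ∃ η : CoeffDGAHom,
      η.A₁ = (fun _ => (1 : ℝ)) ∧ η.F₁ = (fun _ => (0 : ℝ)) ∧
      η.A₂ = (fun _ => (0 : ℝ)) ∧ η.F₂ = (fun _ => -2 * L ^ 6) ∧
      η.B = (fun t => L ^ 6 * (2 * t - 1)) ∧ η.G = (fun _ => (0 : ℝ)) ∧
      η.C = (fun t => 2 * L ^ 12 * t * (1 - t)) ∧
      -- restriction at `t = 0` is `φ_L` (the `dt`-parts die under restriction):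
      η.A₁ 0 = 1 ∧ η.A₂ 0 = 0 ∧ η.B 0 = -L ^ 6 ∧ η.C 0 = 0 ∧
      -- restriction at `t = 1` is `ψ_L`:
      η.A₁ 1 = 1 ∧ η.A₂ 1 = 0 ∧ η.B 1 = L ^ 6 ∧ η.C 1 = 0 :=
  ⟨etaL L, rfl, rfl, rfl, rfl, rfl, rfl, rfl, rfl, rfl, by simp [etaL], by simp [etaL],
    rfl, rfl, by norm_num [etaL], by simp [etaL]⟩
end
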